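/- If a graph G on n vertices has no isolated vertices and the complement of G is a forest, then every matrix A ∈ S(G) has the Strong Arnold Property. -/

import Mathlib

/-- The Strong Arnold Property. -/
def HasSAP {V : Type*} [Fintype V] [DecidableEq V] (A : Matrix V V ℝ) : Prop :=
  ∀ X : Matrix V V ℝ, X.IsSymm → (∀ i, X i i = 0) →
    (∀ i j, i ≠ j → A i j ≠ 0 → X i j = 0) → A * X = 0 → X = 0

/-- `A ∈ S(G)`. -/
def InS {V : Type*} [Fintype V] [DecidableEq V] (G : SimpleGraph V)
    (A : Matrix V V ℝ) : Prop :=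
  A.IsSymm ∧ ∀ i j, i ≠ j → (A i j ≠ 0 ↔ G.Adj i j)

/-- Nullity of a square real matrix. -/
noncomputable def nullity {V : Type*} [Fintype V] [DecidableEq V]
    (A : Matrix V V ℝ) : ℕ :=
  Fintype.card V - A.rank

/-- Maximum nullity over `S(G)`. -/
noncomputable def MaxNull {V : Type*} [Fintype V] [DecidableEq V]
    (G : SimpleGraph V) : ℕ :=
  sSup {k | ∃ A : Matrix V V ℝ, InS G A ∧ nullity A = k}

/-- The Colin de Verdière type parameter `ξ(G)`. -/
noncomputable def xi {V : Type*} [Fintype V] [DecidableEq V]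
    (G : SimpleGraph V) : ℕ :=
  sSup {k | ∃ A : Matrix V V ℝ, InS G A ∧ HasSAP A ∧ nullity A = k}

/-!
Let `X ≠ 0` be a witness against the SAP of `A`. The support graph of `X` lives on the non-edges
of `G`, so it is a nonempty forest and has a leaf `u` with unique neighbour `v`. Column `u` of `X`
is then a nonzero multiple of `e_v`, so column `u` of `A * X = 0` is a nonzero multiple of column
`v` of `A`, which must vanish; this contradicts `v` having a neighbour in `G`.
-/

namespace SimpleGraph

theorem IsAcyclic.exists_adj_forall_adj_eq {V : Type*} [Finite V] {G : SimpleGraph V}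
    (hG : G.IsAcyclic) {a b : V} (hab : G.Adj a b) :
    ∃ u v, G.Adj u v ∧ ∀ w, G.Adj u w → w = v := by
  have : Nonempty V := ⟨a⟩
  -- the start of a longest path is a leaf
  obtain ⟨u, v, p, hp, hmax⟩ := Walk.exists_isPath_forall_isPath_length_le_length G
  have hnil : ¬p.Nil := Walk.not_nil_iff_lt_length.2 <|
    hmax a b (.cons hab .nil) (by simp [hab.ne])
  refine ⟨u, p.snd, p.adj_snd hnil, fun w hw => hG.eq_snd_of_adj_start hp hw ?_⟩
  by_contra hw_not_mem
  simpa using hmax w v (p.cons hw.symm) (hp.cons hw_not_mem)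

end SimpleGraph

namespace Matrix

variable {m n p R : Type*}

def supportGraph (X : Matrix n n R) [Zero R] : SimpleGraph n :=
  SimpleGraph.fromRel fun i j => X i j ≠ 0

theorem IsSymm.supportGraph_adj_iff [Zero R] {X : Matrix n n R} (hX : X.IsSymm)
    (hdiag : ∀ i, X i i = 0) {i j : n} : X.supportGraph.Adj i j ↔ X i j ≠ 0 := by
  rw [supportGraph, SimpleGraph.fromRel_adj, hX.apply j i, or_self, and_iff_right_iff_imp]
  rintro hij rfl
  exact hij (hdiag i)

theorem col_eq_zero_of_mul_eq_zero [Fintype n] [NonUnitalNonAssocSemiring R]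
    [NoZeroDivisors R] {A : Matrix m n R} {X : Matrix n p R} (hAX : A * X = 0) {u : p} {v : n}
    (hvu : X v u ≠ 0) (hcol : ∀ k, k ≠ v → X k u = 0) (i : m) : A i v = 0 := by
  have h := congrFun (congrFun hAX i) u
  rw [mul_apply, zero_apply, Finset.sum_eq_single v (fun k _ hk => by rw [hcol k hk, mul_zero])
    (by simp)] at h
  exact (mul_eq_zero.mp h).resolve_right hvu

end Matrix

theorem stmt_7 {V : Type*} [Fintype V] [DecidableEq V] (G : SimpleGraph V)
    (hiso : ∀ v : V, ∃ w, G.Adj v w) (hforest : Gᶜ.IsAcyclic) :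
    ∀ A : Matrix V V ℝ, InS G A → HasSAP A := by
  rintro A ⟨-, hAG⟩ X hXsymm hXdiag hXsupp hAX
  by_contra hX
  have hH (i j : V) := hXsymm.supportGraph_adj_iff hXdiag (i := i) (j := j)
  have hHG : X.supportGraph ≤ Gᶜ := fun i j hij =>
    ⟨hij.ne, fun hG => (hH i j).1 hij (hXsupp i j hij.ne ((hAG i j hij.ne).2 hG))⟩
  obtain ⟨i, j, hij⟩ : ∃ i j, X i j ≠ 0 := by
    by_contra! h
    exact hX (Matrix.ext h)
  obtain ⟨u, v, huv, hleaf⟩ := (hforest.anti hHG).exists_adj_forall_adj_eq ((hH i j).2 hij)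
  have hcol (k : V) (hk : k ≠ v) : X k u = 0 := by
    by_contra hku
    exact hk (hleaf k ((hH u k).2 (hXsymm.apply k u ▸ hku)))
  obtain ⟨w, hvw⟩ := hiso v
  exact (hAG w v hvw.ne.symm).2 hvw.symm
    (Matrix.col_eq_zero_of_mul_eq_zero hAX ((hH v u).1 huv.symm) hcol w)
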